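/- arXiv:1806.05331 — 2 statements merged into one kernel-verified Lean document; each statement's English description precedes it below -/
import Mathlib

section
/- Every lattice polygon Δ ⊂ ℝ² (the convex hull of finitely many points of ℤ², of dimension 2) which has no interior lattice point and no lattice point in the relative interior of any of its edges is equivalent, under the action of GL₂(ℤ) combined with lattice translations, either to the unit triangle conv{(0,0),(1,0),(0,1)} or to the unit square conv{(0,0),(1,0),(0,1),(1,1)}. -/
/-!
Every lattice point of `Δ` is a vertex. Two vertices congruent modulo `2` would have their
midpoint as a further lattice point of `Δ`, so there are at most four vertices. Any three
vertices span a triangle without further lattice points, and such a triangle has determinant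
`±1`: if its edge vectors span a sublattice of index `d ≥ 2`, a nonzero coset representative
taken in the fundamental parallelogram (and reflected into the triangle if needed) is an extra
lattice point. A unimodular triangle is mapped onto the unit triangle. With four vertices, the
four triangle determinants being `±1` forces a parallelogram, which is mapped onto the unit
square.
-/

/-- The embedding `ℤ² ↪ ℝ²`. -/
def toR2 (p : ℤ × ℤ) : ℝ × ℝ := ((p.1 : ℝ), (p.2 : ℝ))

/-- The lattice polygon spanned by a finite set of lattice points. -/
def latticeHull (S : Finset (ℤ × ℤ)) : Set (ℝ × ℝ) := convexHull ℝ (toR2 '' ↑S)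

/-- The affine map `p ↦ A p + b` on the lattice `ℤ²` given by an integer matrix `A`
and a translation vector `b`. -/
def affineLatticeMap (A : Matrix (Fin 2) (Fin 2) ℤ) (b : ℤ × ℤ) (p : ℤ × ℤ) : ℤ × ℤ :=
  (A 0 0 * p.1 + A 0 1 * p.2 + b.1, A 1 0 * p.1 + A 1 1 * p.2 + b.2)

@[simp]
theorem toR2_add (u v : ℤ × ℤ) : toR2 (u + v) = toR2 u + toR2 v := by
  simp [toR2]

@[simp]
theorem toR2_sub (u v : ℤ × ℤ) : toR2 (u - v) = toR2 u - toR2 v := by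
  simp [toR2]

@[simp]
theorem toR2_zsmul (k : ℤ) (u : ℤ × ℤ) : toR2 (k • u) = (k : ℝ) • toR2 u := by
  simp [toR2]

theorem toR2_injective : Function.Injective toR2 := by
  intro u v h
  simp only [toR2, Prod.mk.injEq, Int.cast_inj] at h
  exact Prod.ext h.1 h.2

theorem latticeHull_mono {S T : Finset (ℤ × ℤ)} (h : S ⊆ T) : latticeHull S ⊆ latticeHull T :=
  convexHull_mono (Set.image_mono (Finset.coe_subset.mpr h))

theorem toR2_mem_latticeHull_triple {p q r w : ℤ × ℤ} {a b c : ℤ} (ha : 0 ≤ a) (hb : 0 ≤ b)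
    (hc : 0 ≤ c) (habc : 0 < a + b + c) (hw : (a + b + c) • w = a • p + b • q + c • r) :
    toR2 w ∈ latticeHull {p, q, r} := by
  have hw' : toR2 w = Finset.univ.centerMass ![(a : ℝ), b, c] ![toR2 p, toR2 q, toR2 r] := by
    have hR := congrArg toR2 hw
    have hd : ((a + b + c : ℤ) : ℝ) ≠ 0 := by exact_mod_cast habc.ne'
    simp only [toR2_add, toR2_zsmul] at hR
    simp only [Finset.centerMass, Fin.sum_univ_three, Matrix.cons_val_zero, Matrix.cons_val_one,
      Matrix.cons_val_two, Matrix.tail_cons, Matrix.head_cons]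
    rw [← hR, smul_smul, ← Int.cast_add, ← Int.cast_add, inv_mul_cancel₀ hd, one_smul]
  rw [hw']
  apply Finset.centerMass_mem_convexHull
  · intro i _
    fin_cases i <;> simpa
  · simpa [Fin.sum_univ_three] using (Int.cast_pos (R := ℝ)).mpr habc
  · intro i _
    fin_cases i <;> exact Set.mem_image_of_mem toR2 (by simp)

def IsLatticeEmpty (S : Finset (ℤ × ℤ)) : Prop :=
  ∀ w : ℤ × ℤ, toR2 w ∈ latticeHull S → toR2 w ∈ (latticeHull S).extremePoints ℝ

theorem isLatticeEmpty_of_forall_notMem_interior {S : Finset (ℤ × ℤ)}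
    (hint : ∀ p : ℤ × ℤ, toR2 p ∉ interior (latticeHull S))
    (hfront : ∀ p : ℤ × ℤ, toR2 p ∈ frontier (latticeHull S) →
      toR2 p ∈ (latticeHull S).extremePoints ℝ) :
    IsLatticeEmpty S :=
  fun w hw => hfront w ⟨subset_closure hw, hint w⟩

namespace IsLatticeEmpty

variable {S : Finset (ℤ × ℤ)}

theorem mem_of_toR2_mem_latticeHull (hS : IsLatticeEmpty S) {T : Finset (ℤ × ℤ)} (hT : T ⊆ S)
    {w : ℤ × ℤ} (hw : toR2 w ∈ latticeHull T) : w ∈ T := by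
  have hext := inter_extremePoints_subset_extremePoints_of_subset (latticeHull_mono hT)
    ⟨hw, hS w (latticeHull_mono hT hw)⟩
  obtain ⟨v, hv, hvw⟩ := extremePoints_convexHull_subset hext
  rwa [← toR2_injective hvw]

theorem card_le_four (hS : IsLatticeEmpty S) : S.card ≤ 4 := by
  have hinj : Set.InjOn (fun x : ℤ × ℤ => ((x.1 : ZMod 2), (x.2 : ZMod 2))) S := by
    intro x (hx : x ∈ S) y (hy : y ∈ S) hxy
    simp only [Prod.mk.injEq, ZMod.intCast_eq_intCast_iff_dvd_sub, Nat.cast_ofNat] at hxy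
    obtain ⟨⟨k₁, hk₁⟩, ⟨k₂, hk₂⟩⟩ := hxy
    have hmid : toR2 (x + (k₁, k₂)) ∈ latticeHull {x, y, y} :=
      toR2_mem_latticeHull_triple (a := 1) (b := 1) (c := 0) (by simp) (by simp) le_rfl
        (by simp) (by ext <;> simp <;> omega)
    have hmem := hS.mem_of_toR2_mem_latticeHull (by simp [Finset.insert_subset_iff, hx, hy]) hmid
    simp only [Finset.mem_insert, Finset.mem_singleton, or_self, Prod.ext_iff, Prod.fst_add,
      Prod.snd_add] at hmem
    ext <;> omega
  simpa using Finset.card_le_card_of_injOn _ (fun _ _ => Finset.mem_coe.2 (Finset.mem_univ _)) hinj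

end IsLatticeEmpty

theorem three_le_card_of_not_collinear {S : Finset (ℤ × ℤ)} (h : ¬ Collinear ℝ (toR2 '' ↑S)) :
    3 ≤ S.card := by
  contrapose! h
  rcases S.eq_empty_or_nonempty with rfl | hne
  · simp [collinear_empty]
  obtain ⟨n, hn⟩ := Nat.exists_eq_add_of_lt hne.card_pos
  rw [← Finset.coe_image, collinear_iff_finrank_le_one]
  exact (finrank_vectorSpan_image_finset_le ℝ toR2 S hn).trans (by omega)

def cross (u v : ℤ × ℤ) : ℤ := u.1 * v.2 - u.2 * v.1

theorem cross_swap (u v : ℤ × ℤ) : cross v u = -cross u v := by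
  unfold cross
  ring

theorem eq_zero_of_smul_add_smul_eq_zero {u v : ℤ × ℤ} (h : cross u v ≠ 0) {a b : ℤ}
    (hab : a • u + b • v = 0) : a = 0 ∧ b = 0 := by
  simp only [Prod.ext_iff, Prod.fst_add, Prod.snd_add, Prod.smul_fst, Prod.smul_snd,
    smul_eq_mul, Prod.fst_zero, Prod.snd_zero] at hab
  unfold cross at h
  refine ⟨(mul_eq_zero.mp ?_).resolve_right h, (mul_eq_zero.mp ?_).resolve_right h⟩
  · linear_combination v.2 * hab.1 - v.1 * hab.2
  · linear_combination u.1 * hab.2 - u.2 * hab.1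

/-- If `cross u v = d ≥ 2`, the lattice generated by `u` and `v` has index `d`, so some
`(a • u + b • v) / d` with `0 ≤ a, b < d`, `(a, b) ≠ 0` is a lattice point; reflecting
`(a, b)` to `(d - a, d - b)` if necessary puts it in the triangle `a + b ≤ d`. -/
theorem exists_smul_eq_smul_add_smul_of_two_le_cross {u v : ℤ × ℤ} (hd : 2 ≤ cross u v) :
    ∃ (a b : ℤ) (w : ℤ × ℤ), 0 ≤ a ∧ 0 ≤ b ∧ 0 < a + b ∧ a + b ≤ cross u v ∧
      a < cross u v ∧ b < cross u v ∧ cross u v • w = a • u + b • v := by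
  set d := cross u v with hd_def
  have hd0 : 0 < d := by omega
  -- `v.2 • u - u.2 • v = (d, 0)` and `-v.1 • u + u.1 • v = (0, d)`
  obtain ⟨a₀, b₀, w₀, hndvd, hw₀⟩ : ∃ (a₀ b₀ : ℤ) (w₀ : ℤ × ℤ),
      ¬ (d ∣ a₀ ∧ d ∣ b₀) ∧ d • w₀ = a₀ • u + b₀ • v := by
    by_cases h₁ : d ∣ v.2 ∧ d ∣ u.2
    · refine ⟨-v.1, u.1, (0, 1), fun h₂ => ?_, by ext <;> simp [hd_def, cross] <;> ring⟩
      have hdd : d * d ∣ u.1 * v.2 - u.2 * v.1 :=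
        dvd_sub (mul_dvd_mul h₂.2 h₁.1) (mul_dvd_mul h₁.2 (dvd_neg.mp h₂.1))
      have := Int.le_of_dvd one_pos
        ((mul_dvd_mul_iff_left (b := d) (c := 1) hd0.ne').mp (by rwa [mul_one]))
      omega
    · exact ⟨v.2, -u.2, (1, 0), by simpa [and_comm] using h₁,
        by ext <;> simp [hd_def, cross] <;> ring⟩
  have hmod (n : ℤ) : d * (n / d) + n % d = n := Int.mul_ediv_add_emod n d
  have ha₁ := Int.emod_nonneg a₀ hd0.ne'
  have hb₁ := Int.emod_nonneg b₀ hd0.ne'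
  have ha₁d := Int.emod_lt_of_pos a₀ hd0
  have hb₁d := Int.emod_lt_of_pos b₀ hd0
  have hab₁ : 0 < a₀ % d + b₀ % d := by
    rw [Int.dvd_iff_emod_eq_zero, Int.dvd_iff_emod_eq_zero] at hndvd
    omega
  have hw₁ : d • (w₀ - (a₀ / d) • u - (b₀ / d) • v) = (a₀ % d) • u + (b₀ % d) • v := by
    rw [Prod.ext_iff] at hw₀ ⊢
    simp only [Prod.smul_fst, Prod.smul_snd, Prod.fst_add, Prod.snd_add, Prod.fst_sub,
      Prod.snd_sub, smul_eq_mul] at hw₀ ⊢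
    constructor
    · linear_combination hw₀.1 - u.1 * hmod a₀ - v.1 * hmod b₀
    · linear_combination hw₀.2 - u.2 * hmod a₀ - v.2 * hmod b₀
  by_cases hle : a₀ % d + b₀ % d ≤ d
  · exact ⟨_, _, _, ha₁, hb₁, hab₁, hle, ha₁d, hb₁d, hw₁⟩
  · refine ⟨d - a₀ % d, d - b₀ % d, u + v - (w₀ - (a₀ / d) • u - (b₀ / d) • v),
      by omega, by omega, by omega, by omega, by omega, by omega, ?_⟩
    rw [smul_sub, hw₁, smul_add, sub_smul, sub_smul]
    abel

theorem exists_mem_latticeHull_triple_of_two_le_cross {p q r : ℤ × ℤ}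
    (hd : 2 ≤ cross (q - p) (r - p)) :
    ∃ w, w ∉ ({p, q, r} : Finset (ℤ × ℤ)) ∧ toR2 w ∈ latticeHull {p, q, r} := by
  obtain ⟨a, b, w, ha, hb, hab, habd, had, hbd, hw⟩ :=
    exists_smul_eq_smul_add_smul_of_two_le_cross hd
  set d := cross (q - p) (r - p) with hd_def
  have hd0 : d ≠ 0 := by omega
  refine ⟨p + w, ?_, toR2_mem_latticeHull_triple (a := d - a - b) (b := a) (c := b)
    (by omega) ha hb (by omega) (by linear_combination (norm := module) hw)⟩
  simp only [Finset.mem_insert, Finset.mem_singleton, not_or]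
  refine ⟨fun h => ?_, fun h => ?_, fun h => ?_⟩
  · rw [add_eq_left] at h
    have := eq_zero_of_smul_add_smul_eq_zero hd0 (a := a) (b := b) (by rw [← hw, h, smul_zero])
    omega
  · rw [← eq_sub_iff_add_eq'] at h
    have := eq_zero_of_smul_add_smul_eq_zero hd0 (a := a - d) (b := b)
      (by rw [h] at hw; linear_combination (norm := module) hw.symm)
    omega
  · rw [← eq_sub_iff_add_eq'] at h
    have := eq_zero_of_smul_add_smul_eq_zero hd0 (a := a) (b := b - d)
      (by rw [h] at hw; linear_combination (norm := module) hw.symm)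
    omega

theorem isUnit_cross_of_forall_mem_latticeHull_triple {p q r : ℤ × ℤ}
    (h0 : cross (q - p) (r - p) ≠ 0)
    (hempty : ∀ w, toR2 w ∈ latticeHull {p, q, r} → w ∈ ({p, q, r} : Finset (ℤ × ℤ))) :
    IsUnit (cross (q - p) (r - p)) := by
  rw [Int.isUnit_iff]
  by_contra hne
  have := cross_swap (q - p) (r - p)
  rcases (by omega : 2 ≤ cross (q - p) (r - p) ∨ 2 ≤ cross (r - p) (q - p)) with hd | hd
  · obtain ⟨w, hw, hmem⟩ := exists_mem_latticeHull_triple_of_two_le_cross hd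
    exact hw (hempty w hmem)
  · obtain ⟨w, hw, hmem⟩ := exists_mem_latticeHull_triple_of_two_le_cross hd
    rw [Finset.pair_comm] at hw hmem
    exact hw (hempty w hmem)

theorem collinear_of_cross_eq_zero {x y z : ℤ × ℤ} (h : cross (y - x) (z - x) = 0) :
    Collinear ℝ {toR2 x, toR2 y, toR2 z} := by
  rcases eq_or_ne y x with rfl | hyx
  · simpa using collinear_pair ℝ (toR2 y) (toR2 z)
  rw [collinear_iff_of_mem (Set.mem_insert _ _)]
  refine ⟨toR2 (y - x), ?_⟩
  simp only [Set.mem_insert_iff, Set.mem_singleton_iff, forall_eq_or_imp, forall_eq]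
  refine ⟨⟨0, by simp⟩, ⟨1, by simp⟩, ?_⟩
  -- `z - x` is its own orthogonal projection onto the line spanned by `y - x`
  set u := y - x
  set v := z - x
  have hu : (u.1 : ℝ) ^ 2 + (u.2 : ℝ) ^ 2 ≠ 0 := by
    have : u.1 ≠ 0 ∨ u.2 ≠ 0 := by
      by_contra! h0
      exact sub_ne_zero.mpr hyx (Prod.ext h0.1 h0.2)
    rcases this with h1 | h1 <;> positivity
  have hR : (u.1 : ℝ) * v.2 - u.2 * v.1 = 0 := by exact_mod_cast h
  refine ⟨(u.1 * v.1 + u.2 * v.2 : ℝ) / (u.1 ^ 2 + u.2 ^ 2), ?_⟩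
  have hz : toR2 z = toR2 v + toR2 x := by simp [v]
  rw [hz, vadd_eq_add, add_left_inj]
  simp only [toR2, Prod.smul_mk, smul_eq_mul, Prod.mk.injEq]
  constructor <;> field_simp
  · linear_combination (-u.2 : ℝ) * hR
  · linear_combination (u.1 : ℝ) * hR

theorem IsLatticeEmpty.isUnit_cross {S : Finset (ℤ × ℤ)} (hS : IsLatticeEmpty S)
    {x y z : ℤ × ℤ} (hx : x ∈ S) (hy : y ∈ S) (hz : z ∈ S)
    (hxy : x ≠ y) (hxz : x ≠ z) (hyz : y ≠ z) : IsUnit (cross (y - x) (z - x)) := by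
  refine isUnit_cross_of_forall_mem_latticeHull_triple (fun h0 => ?_)
    (fun w => hS.mem_of_toR2_mem_latticeHull (by simp [Finset.insert_subset_iff, hx, hy, hz]))
  have hseg {a b c : ℤ × ℤ} (ha : a ∈ S) (hc : c ∈ S) (h : Wbtw ℝ (toR2 a) (toR2 b) (toR2 c)) :
      b = a ∨ b = c := by
    have hb : toR2 b ∈ latticeHull {a, c} := by
      simpa [latticeHull, Set.image_insert_eq, convexHull_pair, mem_segment_iff_wbtw] using h
    simpa using hS.mem_of_toR2_mem_latticeHull (by simp [Finset.insert_subset_iff, ha, hc]) hb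
  rcases (collinear_of_cross_eq_zero h0).wbtw_or_wbtw_or_wbtw with h | h | h
  · rcases hseg hx hz h with h | h <;> simp_all
  · rcases hseg hy hx h with h | h <;> simp_all
  · rcases hseg hz hy h with h | h <;> simp_all

theorem affineLatticeMap_add_sub (A : Matrix (Fin 2) (Fin 2) ℤ) (b x y z : ℤ × ℤ) :
    affineLatticeMap A b (x + y - z) =
      affineLatticeMap A b x + affineLatticeMap A b y - affineLatticeMap A b z := by
  simp only [affineLatticeMap, Prod.fst_add, Prod.snd_add, Prod.fst_sub, Prod.snd_sub,
    Prod.mk_add_mk, Prod.mk_sub_mk, Prod.mk.injEq]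
  constructor <;> ring

/-- The map is `s ↦ ε • adj(M) (s - p)`, where `M` has columns `q - p`, `r - p` and
`ε = det M = ε⁻¹`. -/
theorem exists_affineLatticeMap_triple {p q r : ℤ × ℤ} (h : IsUnit (cross (q - p) (r - p))) :
    ∃ (A : Matrix (Fin 2) (Fin 2) ℤ) (b : ℤ × ℤ), IsUnit A.det ∧
      affineLatticeMap A b p = (0, 0) ∧ affineLatticeMap A b q = (1, 0) ∧
      affineLatticeMap A b r = (0, 1) := by
  set ε := cross (q - p) (r - p) with hε
  have hεε : ε * ε = 1 := Int.isUnit_mul_self h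
  let A : Matrix (Fin 2) (Fin 2) ℤ :=
    ε • !![r.2 - p.2, -(r.1 - p.1); -(q.2 - p.2), q.1 - p.1]
  have hA : A.det = ε * ε * ε := by
    simp only [A, Matrix.det_smul, Matrix.det_fin_two_of, hε, cross, Prod.fst_sub, Prod.snd_sub,
      Fintype.card_fin]
    ring
  have hεX : ε = (q.1 - p.1) * (r.2 - p.2) - (q.2 - p.2) * (r.1 - p.1) := rfl
  refine ⟨A, -(A 0 0 * p.1 + A 0 1 * p.2, A 1 0 * p.1 + A 1 1 * p.2),
    by rw [hA, hεε, one_mul]; exact h, ?_, ?_, ?_⟩ <;>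
  simp only [affineLatticeMap, A, Matrix.smul_apply, Matrix.of_apply, Matrix.cons_val',
    Matrix.cons_val_zero, Matrix.cons_val_one, Matrix.empty_val', Matrix.cons_val_fin_one,
    smul_eq_mul, Prod.fst_neg, Prod.snd_neg, Prod.mk.injEq]
  · constructor <;> ring
  · exact ⟨by linear_combination hεε - ε * hεX, by ring⟩
  · exact ⟨by ring, by linear_combination hεε - ε * hεX⟩

theorem exists_image_triple_eq_unitTriangle {p q r : ℤ × ℤ} (h : IsUnit (cross (q - p) (r - p))) :
    ∃ (A : Matrix (Fin 2) (Fin 2) ℤ) (b : ℤ × ℤ), IsUnit A.det ∧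
      ({p, q, r} : Finset (ℤ × ℤ)).image (affineLatticeMap A b) = {(0, 0), (1, 0), (0, 1)} := by
  obtain ⟨A, b, hA, hp, hq, hr⟩ := exists_affineLatticeMap_triple h
  refine ⟨A, b, hA, ?_⟩
  rw [Finset.image_insert, Finset.image_insert, Finset.image_singleton, hp, hq, hr]

theorem exists_image_parallelogram_eq_unitSquare {p q r s : ℤ × ℤ}
    (h : IsUnit (cross (q - p) (r - p))) (hs : s = q + r - p) :
    ∃ (A : Matrix (Fin 2) (Fin 2) ℤ) (b : ℤ × ℤ), IsUnit A.det ∧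
      ({p, q, r, s} : Finset (ℤ × ℤ)).image (affineLatticeMap A b) =
        {(0, 0), (1, 0), (0, 1), (1, 1)} := by
  obtain ⟨A, b, hA, hp, hq, hr⟩ := exists_affineLatticeMap_triple h
  refine ⟨A, b, hA, ?_⟩
  rw [Finset.image_insert, Finset.image_insert, Finset.image_insert, Finset.image_singleton, hs,
    affineLatticeMap_add_sub, hp, hq, hr]
  rfl

/-- Cramer's rule writes `w = X • u + Y • v` with `X, Y = ±1`; the fourth determinant
`cross (v - u) (w - u) = ±(1 - X - Y)` rules out `X = Y = -1`. -/
theorem eq_add_or_eq_sub_of_isUnit_cross {u v w : ℤ × ℤ} (huv : IsUnit (cross u v))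
    (huw : IsUnit (cross u w)) (hwv : IsUnit (cross w v))
    (h : IsUnit (cross (v - u) (w - u))) :
    w = u + v ∨ w = u - v ∨ w = v - u := by
  have hcramer : cross u v • w = cross w v • u + cross u w • v := by
    ext <;> simp only [cross, Prod.smul_fst, Prod.smul_snd, Prod.fst_add, Prod.snd_add,
      smul_eq_mul] <;> ring
  have hexpand : cross (v - u) (w - u) = cross u v - cross w v - cross u w := by
    simp only [cross, Prod.fst_sub, Prod.snd_sub]
    ring
  simp only [Prod.ext_iff, Prod.smul_fst, Prod.smul_snd, Prod.fst_add, Prod.snd_add,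
    smul_eq_mul] at hcramer
  simp only [Prod.ext_iff, Prod.fst_add, Prod.snd_add, Prod.fst_sub, Prod.snd_sub]
  rw [hexpand, Int.isUnit_iff] at h
  rcases Int.isUnit_iff.mp huv with h₁ | h₁ <;> rcases Int.isUnit_iff.mp huw with h₂ | h₂ <;>
    rcases Int.isUnit_iff.mp hwv with h₃ | h₃ <;> rw [h₁, h₂, h₃] at hcramer h <;> omega

theorem IsLatticeEmpty.exists_image_eq_unitSquare {p q r s : ℤ × ℤ}
    (hS : IsLatticeEmpty {p, q, r, s}) (hpq : p ≠ q) (hpr : p ≠ r) (hps : p ≠ s)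
    (hqr : q ≠ r) (hqs : q ≠ s) (hrs : r ≠ s) :
    ∃ (A : Matrix (Fin 2) (Fin 2) ℤ) (b : ℤ × ℤ), IsUnit A.det ∧
      ({p, q, r, s} : Finset (ℤ × ℤ)).image (affineLatticeMap A b) =
        {(0, 0), (1, 0), (0, 1), (1, 1)} := by
  have hunit {x y z : ℤ × ℤ} (hxy : x ≠ y) (hxz : x ≠ z) (hyz : y ≠ z)
      (hx : x ∈ ({p, q, r, s} : Finset (ℤ × ℤ)) := by simp)
      (hy : y ∈ ({p, q, r, s} : Finset (ℤ × ℤ)) := by simp)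
      (hz : z ∈ ({p, q, r, s} : Finset (ℤ × ℤ)) := by simp) :
      IsUnit (cross (y - x) (z - x)) :=
    hS.isUnit_cross hx hy hz hxy hxz hyz
  have hqrs := hunit hqr hqs hrs
  rw [← sub_sub_sub_cancel_right r q p, ← sub_sub_sub_cancel_right s q p] at hqrs
  rcases eq_add_or_eq_sub_of_isUnit_cross (hunit hpq hpr hqr) (hunit hpq hps hqs)
    (hunit hps hpr hrs.symm) hqrs with h | h | h
  · exact exists_image_parallelogram_eq_unitSquare (hunit hpq hpr hqr) (by linear_combination h)
  · rw [show ({p, q, r, s} : Finset (ℤ × ℤ)) = {r, q, p, s} by ext; simp; tauto]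
    exact exists_image_parallelogram_eq_unitSquare (hunit hqr.symm hpr.symm hpq.symm)
      (by linear_combination h)
  · rw [show ({p, q, r, s} : Finset (ℤ × ℤ)) = {q, r, p, s} by ext; simp; tauto]
    exact exists_image_parallelogram_eq_unitSquare (hunit hqr hpq.symm hpr.symm)
      (by linear_combination h)

theorem lattice_polygon_no_interior_classification
    (S : Finset (ℤ × ℤ))
    -- the polygon is two-dimensional:
    (hdim : ¬ Collinear ℝ (toR2 '' ↑S))
    -- no interior lattice point:
    (hnoint : ∀ p : ℤ × ℤ, toR2 p ∉ interior (latticeHull S))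
    -- no lattice point in the relative interior of an edge:
    (hbdry : ∀ p : ℤ × ℤ, toR2 p ∈ frontier (latticeHull S) →
      toR2 p ∈ Set.extremePoints ℝ (latticeHull S)) :
    ∃ (A : Matrix (Fin 2) (Fin 2) ℤ) (b : ℤ × ℤ), IsUnit A.det ∧
      (latticeHull (S.image (affineLatticeMap A b)) =
          latticeHull {(0, 0), (1, 0), (0, 1)} ∨
        latticeHull (S.image (affineLatticeMap A b)) =
          latticeHull {(0, 0), (1, 0), (0, 1), (1, 1)}) := by
  have hS : IsLatticeEmpty S := isLatticeEmpty_of_forall_notMem_interior hnoint hbdry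
  have hcard : S.card = 3 ∨ S.card = 4 := by
    have := three_le_card_of_not_collinear hdim
    have := hS.card_le_four
    omega
  rcases hcard with hcard | hcard
  · obtain ⟨p, q, r, hpq, hpr, hqr, rfl⟩ := Finset.card_eq_three.mp hcard
    obtain ⟨A, b, hA, himage⟩ := exists_image_triple_eq_unitTriangle
      (hS.isUnit_cross (by simp) (by simp) (by simp) hpq hpr hqr)
    exact ⟨A, b, hA, Or.inl (by rw [himage])⟩
  · obtain ⟨p, q, r, s, hpq, hpr, hps, hqr, hqs, hrs, rfl⟩ := Finset.card_eq_four.mp hcard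
    obtain ⟨A, b, hA, himage⟩ := hS.exists_image_eq_unitSquare hpq hpr hps hqr hqs hrs
    exact ⟨A, b, hA, Or.inr (by rw [himage])⟩
end

section
/- Let Q be the quiver of a dimer model and D a perfect matching of Q. If k ∈ Q₀ is a strict source of (Q,D), then: (a) λ_k⁺(D) is again a perfect matching of Q; (b) k is a strict sink of (Q, λ_k⁺(D)); (c) λ_k⁻(λ_k⁺(D)) = D. Dually, if k is a strict sink of (Q,D), then λ_k⁻(D) is a perfect matching of Q, k is a strict source of (Q, λ_k⁻(D)), and λ_k⁺(λ_k⁻(D)) = D. -/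
/-!
Common combinatorial framework for dimer models on the real two-torus.

A dimer model is encoded by its finite sets of white nodes, black nodes, edges and faces,
the incidence maps, the rotation system (the cyclic order of the edges around each node,
recorded via the "next arrow in the small cycle" maps `nw`, `nb` of the dual quiver), and
the homology data `h : Edge → ℤ × ℤ` recording the class in `H₁(𝕋) ≅ ℤ²` of each edge
(oriented from its white endpoint to its black endpoint, relative to fixed lifts of the
nodes to the universal cover).  The axiom `face_balance` expresses that the boundary of
each face is contractible in the torus.
-/

structure DimerModel where
  White : Type
  Black : Type
  Edge : Type
  Face : Type
  fw : Fintype White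
  fb : Fintype Black
  fe : Fintype Edge
  ff : Fintype Face
  dw : DecidableEq White
  db : DecidableEq Black
  de : DecidableEq Edge
  df : DecidableEq Face
  /-- the white endpoint of an edge -/
  we : Edge → White
  /-- the black endpoint of an edge -/
  be : Edge → Black
  we_surj : Function.Surjective we
  be_surj : Function.Surjective be
  /-- the tail of the dual arrow (the face on the left of the edge) -/
  tl : Edge → Face
  /-- the head of the dual arrow -/
  hd : Edge → Face
  /-- next arrow in the small cycle around the white node -/
  nw : Edge → Edge
  /-- next arrow in the small cycle around the black node -/
  nb : Edge → Edge
  nw_white : ∀ e, we (nw e) = we e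
  nw_comp : ∀ e, tl (nw e) = hd e
  nw_cyc : ∀ e e', we e = we e' → ∃ n, nw^[n] e = e'
  nb_black : ∀ e, be (nb e) = be e
  nb_comp : ∀ e, tl (nb e) = hd e
  nb_cyc : ∀ e e', be e = be e' → ∃ n, nb^[n] e = e'
  /-- homology class of the edge, oriented from white to black -/
  h : Edge → ℤ × ℤ
  face_balance : ∀ f : Face,
    (∑ e ∈ Finset.univ.filter (fun e => hd e = f), h e) =
      ∑ e ∈ Finset.univ.filter (fun e => tl e = f), h e
  connected : ∀ f f' : Face,
    Relation.ReflTransGen (fun x y => ∃ e, (tl e = x ∧ hd e = y) ∨ (tl e = y ∧ hd e = x)) f f'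

attribute [instance] DimerModel.fw DimerModel.fb DimerModel.fe DimerModel.ff
attribute [instance] DimerModel.dw DimerModel.db DimerModel.de DimerModel.df

namespace DimerModel

variable (Γ : DimerModel)

/-- A perfect matching: a set of edges containing exactly one edge at every node. -/
def IsPM (D : Finset Γ.Edge) : Prop :=
  (∀ w : Γ.White, ∃! e : Γ.Edge, e ∈ D ∧ Γ.we e = w) ∧
  (∀ b : Γ.Black, ∃! e : Γ.Edge, e ∈ D ∧ Γ.be e = b)

/-- Total homology vector of a set of edges (each oriented from white to black). -/
def pmVec (D : Finset Γ.Edge) : ℤ × ℤ := ∑ e ∈ D, Γ.h e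

/-- The class `[D - D₀] ∈ H₁(𝕋) ≅ ℤ²` of the difference of two perfect matchings. -/
def relClass (D D₀ : Finset Γ.Edge) : ℤ × ℤ := Γ.pmVec D - Γ.pmVec D₀

end DimerModel

namespace DimerModel

variable (Γ : DimerModel)

/-- The perfect matching polygon of a dimer model, relative to a reference
perfect matching `D₀`: the convex hull of the classes `[D - D₀]` of all perfect
matchings `D`. -/
def PMPolygon (D₀ : Finset Γ.Edge) : Set (ℝ × ℝ) :=
  convexHull ℝ {x | ∃ D, Γ.IsPM D ∧ x = toR2 (Γ.relClass D D₀)}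

/-- An internal perfect matching: its class is an interior lattice point of the PM polygon
(this does not depend on the choice of reference perfect matching). -/
def IsInternalPM (D : Finset Γ.Edge) : Prop :=
  Γ.IsPM D ∧ ∀ D₀, Γ.IsPM D₀ → toR2 (Γ.relClass D D₀) ∈ interior (Γ.PMPolygon D₀)

/-- Two perfect matchings correspond to the same lattice point of the PM polygon. -/
def SameLatticePoint (D D' : Finset Γ.Edge) : Prop :=
  ∀ D₀, Γ.IsPM D₀ → Γ.relClass D D₀ = Γ.relClass D' D₀

/-- Consistency of a dimer model: the existence of a consistent R-charge
(Definition 2.4 of the paper). -/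
def IsConsistent : Prop :=
  ∃ R : Γ.Edge → ℝ, (∀ e, 0 < R e) ∧
    (∀ w : Γ.White, ∑ e ∈ Finset.univ.filter (fun e => Γ.we e = w), R e = 2) ∧
    (∀ b : Γ.Black, ∑ e ∈ Finset.univ.filter (fun e => Γ.be e = b), R e = 2) ∧
    (∀ f : Γ.Face, ((∑ e ∈ Finset.univ.filter (fun e => Γ.hd e = f), (1 - R e)) +
      ∑ e ∈ Finset.univ.filter (fun e => Γ.tl e = f), (1 - R e)) = 2)

/-- A list of arrows is composable (i.e. is a path in the quiver). -/
def Composable (L : List Γ.Edge) : Prop := L.Chain' (fun a b => Γ.hd a = Γ.tl b)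

/-- A nonempty composable list of arrows which closes up: a cycle in the quiver. -/
def IsCycleList (L : List Γ.Edge) : Prop :=
  L ≠ [] ∧ Γ.Composable L ∧
    ∀ a b, L.head? = some a → L.getLast? = some b → Γ.hd b = Γ.tl a

/-- The quiver `Q_D` obtained by deleting the arrows of `D` is acyclic. -/
def AcyclicOffPM (D : Finset Γ.Edge) : Prop :=
  ¬ ∃ L : List Γ.Edge, Γ.IsCycleList L ∧ ∀ e ∈ L, e ∉ D

/-- `f` is a strict source of `(Q, D)`: every arrow ending at `f` lies in `D`
and no arrow starting at `f` does. -/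
def IsStrictSource (D : Finset Γ.Edge) (f : Γ.Face) : Prop :=
  (∀ e, Γ.hd e = f → e ∈ D) ∧ (∀ e, Γ.tl e = f → e ∉ D)

/-- `f` is a strict sink of `(Q, D)`. -/
def IsStrictSink (D : Finset Γ.Edge) (f : Γ.Face) : Prop :=
  (∀ e, Γ.tl e = f → e ∈ D) ∧ (∀ e, Γ.hd e = f → e ∉ D)

/-- Mutation of a perfect matching at a strict source: remove the arrows ending at `f`,
add the arrows starting at `f`. -/
def lambdaPlus (D : Finset Γ.Edge) (f : Γ.Face) : Finset Γ.Edge :=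
  (D.filter (fun e => Γ.hd e ≠ f)) ∪ Finset.univ.filter (fun e => Γ.tl e = f)

/-- Mutation of a perfect matching at a strict sink. -/
def lambdaMinus (D : Finset Γ.Edge) (f : Γ.Face) : Finset Γ.Edge :=
  (D.filter (fun e => Γ.tl e ≠ f)) ∪ Finset.univ.filter (fun e => Γ.hd e = f)

/-- One mutation step between perfect matchings. -/
inductive MutStep : Finset Γ.Edge → Finset Γ.Edge → Prop
  | plus (D : Finset Γ.Edge) (f : Γ.Face) (h : Γ.IsStrictSource D f) :
      MutStep D (Γ.lambdaPlus D f)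
  | minus (D : Finset Γ.Edge) (f : Γ.Face) (h : Γ.IsStrictSink D f) :
      MutStep D (Γ.lambdaMinus D f)

/-- Mutation equivalence of perfect matchings. -/
def MutEquiv : Finset Γ.Edge → Finset Γ.Edge → Prop := Relation.ReflTransGen Γ.MutStep

end DimerModel

/-!
STATEMENT 7: Let `Q` be the quiver of a dimer model and `D` a perfect matching of `Q`.
If `k ∈ Q₀` is a strict source of `(Q, D)`, then (a) `λₖ⁺(D)` is again a perfect matching,
(b) `k` is a strict sink of `(Q, λₖ⁺(D))`, and (c) `λₖ⁻(λₖ⁺(D)) = D`.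
Dually for a strict sink.
-/

namespace DimerModel

variable {Γ : DimerModel}

lemma nw_surj (Γ : DimerModel) : Function.Surjective Γ.nw := by
  intro e
  obtain ⟨n, hn⟩ := Γ.nw_cyc (Γ.nw e) e (Γ.nw_white e)
  refine ⟨Γ.nw^[n] e, ?_⟩
  rw [← Function.iterate_succ_apply] at hn
  rw [Function.iterate_succ_apply'] at hn
  exact hn

lemma nb_surj (Γ : DimerModel) : Function.Surjective Γ.nb := by
  intro e
  obtain ⟨n, hn⟩ := Γ.nb_cyc (Γ.nb e) e (Γ.nb_black e)
  refine ⟨Γ.nb^[n] e, ?_⟩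
  rw [← Function.iterate_succ_apply] at hn
  rw [Function.iterate_succ_apply'] at hn
  exact hn

/-- Around any node, the number of arrows with head `f` equals the number of arrows
with tail `f`. -/
lemma count_aux {N : Type} [DecidableEq N] (p : Γ.Edge → N) (n : Γ.Edge → Γ.Edge)
    (hp : ∀ e, p (n e) = p e) (hc : ∀ e, Γ.tl (n e) = Γ.hd e)
    (hs : Function.Surjective n) (f : Γ.Face) (w : N) :
    (Finset.univ.filter (fun e => p e = w ∧ Γ.hd e = f)).card =
    (Finset.univ.filter (fun e => p e = w ∧ Γ.tl e = f)).card := by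
  have hinj : Function.Injective n := Finite.injective_iff_surjective.mpr hs
  apply Finset.card_bij (fun e _ => n e)
  · intro a ha
    simp only [Finset.mem_filter, Finset.mem_univ, true_and] at ha ⊢
    exact ⟨by rw [hp]; exact ha.1, by rw [hc]; exact ha.2⟩
  · intro a _ b _ h
    exact hinj h
  · intro b hb
    simp only [Finset.mem_filter, Finset.mem_univ, true_and] at hb
    obtain ⟨a, rfl⟩ := hs b
    refine ⟨a, ?_, rfl⟩
    simp only [Finset.mem_filter, Finset.mem_univ, true_and]
    exact ⟨by rw [← hp]; exact hb.1, by rw [← hc]; exact hb.2⟩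

/-- The local uniqueness statement at a node after mutation. -/
lemma node_aux {N : Type} [DecidableEq N] (t hh : Γ.Edge → Γ.Face) (f : Γ.Face) (D : Finset Γ.Edge)
    (p : Γ.Edge → N) (w : N)
    (hcard : (Finset.univ.filter (fun e => p e = w ∧ hh e = f)).card =
             (Finset.univ.filter (fun e => p e = w ∧ t e = f)).card)
    (hin : ∀ e, hh e = f → e ∈ D) (hout : ∀ e, t e = f → e ∉ D)
    (huniq : ∃! e, e ∈ D ∧ p e = w) :
    ∃! e, e ∈ (D.filter fun e => hh e ≠ f) ∪ Finset.univ.filter (fun e => t e = f) ∧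
      p e = w := by
  obtain ⟨e₀, ⟨he₀D, he₀p⟩, hu⟩ := huniq
  by_cases h0 : hh e₀ = f
  · have hset : Finset.univ.filter (fun e => p e = w ∧ hh e = f) = {e₀} := by
      ext e
      simp only [Finset.mem_filter, Finset.mem_univ, true_and, Finset.mem_singleton]
      constructor
      · rintro ⟨hpw, hhf⟩; exact hu e ⟨hin e hhf, hpw⟩
      · rintro rfl; exact ⟨he₀p, h0⟩
    rw [hset, Finset.card_singleton] at hcard
    obtain ⟨e₁, he₁⟩ := Finset.card_eq_one.mp hcard.symm
    have he₁mem : p e₁ = w ∧ t e₁ = f := by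
      have : e₁ ∈ Finset.univ.filter (fun e => p e = w ∧ t e = f) := by
        rw [he₁]; exact Finset.mem_singleton_self e₁
      simpa using this
    refine ⟨e₁, ⟨Finset.mem_union_right _ (by simp [he₁mem.2]), he₁mem.1⟩, ?_⟩
    rintro e ⟨hmem, hpe⟩
    rcases Finset.mem_union.mp hmem with h1 | h2
    · obtain ⟨heD, hne⟩ := Finset.mem_filter.mp h1
      exact absurd (hu e ⟨heD, hpe⟩ ▸ h0) hne
    · have : e ∈ Finset.univ.filter (fun e => p e = w ∧ t e = f) := by
        simp only [Finset.mem_filter, Finset.mem_univ, true_and]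
        exact ⟨hpe, (Finset.mem_filter.mp h2).2⟩
      rw [he₁] at this
      exact Finset.mem_singleton.mp this
  · have hset : Finset.univ.filter (fun e => p e = w ∧ hh e = f) = ∅ := by
      ext e
      simp only [Finset.mem_filter, Finset.mem_univ, true_and, Finset.notMem_empty,
        iff_false, not_and]
      intro hpw hhf
      exact h0 (hu e ⟨hin e hhf, hpw⟩ ▸ hhf)
    rw [hset, Finset.card_empty] at hcard
    have hempt : Finset.univ.filter (fun e => p e = w ∧ t e = f) = ∅ :=
      Finset.card_eq_zero.mp hcard.symm
    refine ⟨e₀, ⟨Finset.mem_union_left _ (Finset.mem_filter.mpr ⟨he₀D, h0⟩), he₀p⟩, ?_⟩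
    rintro e ⟨hmem, hpe⟩
    rcases Finset.mem_union.mp hmem with h1 | h2
    · exact hu e ⟨(Finset.mem_filter.mp h1).1, hpe⟩
    · exfalso
      have : e ∈ Finset.univ.filter (fun e => p e = w ∧ t e = f) := by
        simp only [Finset.mem_filter, Finset.mem_univ, true_and]
        exact ⟨hpe, (Finset.mem_filter.mp h2).2⟩
      rw [hempt] at this
      exact Finset.notMem_empty e this

end DimerModel

theorem mutation_of_perfect_matchings_basic
    (Γ : DimerModel) (D : Finset Γ.Edge) (hD : Γ.IsPM D) (f : Γ.Face) :
    (Γ.IsStrictSource D f →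
      Γ.IsPM (Γ.lambdaPlus D f) ∧
      Γ.IsStrictSink (Γ.lambdaPlus D f) f ∧
      Γ.lambdaMinus (Γ.lambdaPlus D f) f = D) ∧
    (Γ.IsStrictSink D f →
      Γ.IsPM (Γ.lambdaMinus D f) ∧
      Γ.IsStrictSource (Γ.lambdaMinus D f) f ∧
      Γ.lambdaPlus (Γ.lambdaMinus D f) f = D) := by
  constructor
  · intro hsrc
    refine ⟨⟨?_, ?_⟩, ⟨?_, ?_⟩, ?_⟩
    · intro w
      exact DimerModel.node_aux Γ.tl Γ.hd f D Γ.we w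
        (DimerModel.count_aux Γ.we Γ.nw Γ.nw_white Γ.nw_comp Γ.nw_surj f w)
        hsrc.1 hsrc.2 (hD.1 w)
    · intro b
      exact DimerModel.node_aux Γ.tl Γ.hd f D Γ.be b
        (DimerModel.count_aux Γ.be Γ.nb Γ.nb_black Γ.nb_comp Γ.nb_surj f b)
        hsrc.1 hsrc.2 (hD.2 b)
    · intro e hte
      exact Finset.mem_union_right _ (by simp [hte])
    · intro e hhe hmem
      rcases Finset.mem_union.mp hmem with h1 | h2
      · exact (Finset.mem_filter.mp h1).2 hhe
      · exact hsrc.2 e (by simpa using h2) (hsrc.1 e hhe)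
    · ext e
      have h1 := hsrc.1 e
      have h2 := hsrc.2 e
      simp only [DimerModel.lambdaMinus, DimerModel.lambdaPlus, Finset.mem_union,
        Finset.mem_filter, Finset.mem_univ, true_and]
      by_cases hh : Γ.hd e = f <;> by_cases ht : Γ.tl e = f <;> simp_all <;> tauto
  · intro hsnk
    refine ⟨⟨?_, ?_⟩, ⟨?_, ?_⟩, ?_⟩
    · intro w
      exact DimerModel.node_aux Γ.hd Γ.tl f D Γ.we w
        (DimerModel.count_aux Γ.we Γ.nw Γ.nw_white Γ.nw_comp Γ.nw_surj f w).symm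
        hsnk.1 hsnk.2 (hD.1 w)
    · intro b
      exact DimerModel.node_aux Γ.hd Γ.tl f D Γ.be b
        (DimerModel.count_aux Γ.be Γ.nb Γ.nb_black Γ.nb_comp Γ.nb_surj f b).symm
        hsnk.1 hsnk.2 (hD.2 b)
    · intro e hhe
      exact Finset.mem_union_right _ (by simp [hhe])
    · intro e hte hmem
      rcases Finset.mem_union.mp hmem with h1 | h2
      · exact (Finset.mem_filter.mp h1).2 hte
      · exact hsnk.2 e (by simpa using h2) (hsnk.1 e hte)
    · ext e
      have h1 := hsnk.1 e
      have h2 := hsnk.2 e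
      simp only [DimerModel.lambdaMinus, DimerModel.lambdaPlus, Finset.mem_union,
        Finset.mem_filter, Finset.mem_univ, true_and]
      by_cases hh : Γ.hd e = f <;> by_cases ht : Γ.tl e = f <;> simp_all <;> tauto
end
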